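/- arXiv:2512.09689 — 3 statements merged into one kernel-verified Lean document; each statement's English description precedes it below -/
import Mathlib

section
/- Let V be a 2-dimensional real inner product space with basis {v₁, v₂} satisfying ⟨v₁, v₂⟩ ≤ 0. If v ∈ V satisfies ξⱼ(v) := ⟨v, vⱼ⟩/⟨vⱼ, vⱼ⟩ ≥ 0 for j = 1, 2, then ⟨v,v⟩ ≥ ξ₁(v)² ⟨v₁,v₁⟩² ⟨v₂,v₂⟩/(⟨v₁,v₁⟩⟨v₂,v₂⟩ − ⟨v₁,v₂⟩²) + ξ₂(v)² ⟨v₂,v₂⟩² ⟨v₁,v₁⟩/(⟨v₁,v₁⟩⟨v₂,v₂⟩ − ⟨v₁,v₂⟩²). -/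
/-!
Write `a = ⟪v, v₁⟫`, `b = ⟪v, v₂⟫`, `A = ⟪v₁, v₁⟫`, `B = ⟪v₂, v₂⟫`, `C = ⟪v₁, v₂⟫`, so that
`ξ₁ A = a` and `ξ₂ B = b`. The Gram matrix of `v, v₁, v₂` is positive semidefinite, and expanding
its determinant gives `a² B - 2 a b C + b² A ≤ ⟪v, v⟫ (A B - C²)`. Since `a, b ≥ 0 ≥ C`, the cross
term may be dropped, and dividing by `A B - C² ≥ 0` (Cauchy–Schwarz) gives the claim; when
`A B - C² = 0` the right-hand side is `0` by the convention `x / 0 = 0`.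
-/

open Matrix

theorem inner_self_mul_det_gram_two_ge {V : Type*} [NormedAddCommGroup V]
    [InnerProductSpace ℝ V] (v x y : V) :
    inner ℝ v x ^ 2 * inner ℝ y y - 2 * inner ℝ v x * inner ℝ v y * inner ℝ x y
        + inner ℝ v y ^ 2 * inner ℝ x x
      ≤ inner ℝ v v * (inner ℝ x x * inner ℝ y y - inner ℝ x y ^ 2) := by
  have h := (posSemidef_gram ℝ ![v, x, y]).det_nonneg
  simp only [det_fin_three, gram_apply, Fin.isValue, cons_val_zero, cons_val_one, cons_val_two,
    Nat.succ_eq_add_one, Nat.reduceAdd, tail_cons, head_cons] at h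
  simp only [real_inner_comm v x, real_inner_comm v y, real_inner_comm x y] at h
  linarith

theorem real_inner_div_inner_self_mul {V : Type*} [NormedAddCommGroup V]
    [InnerProductSpace ℝ V] (v x : V) :
    inner ℝ v x / inner ℝ x x * inner ℝ x x = (inner ℝ v x : ℝ) :=
  div_mul_cancel_of_imp fun h ↦ by rw [inner_self_eq_zero.mp h, inner_zero_right]

theorem stmt_1_general {V : Type*} [NormedAddCommGroup V] [InnerProductSpace ℝ V]
    (v₁ v₂ : V)
    (hneg : (inner ℝ v₁ v₂ : ℝ) ≤ 0) (v : V)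
    (hξ₁ : 0 ≤ (inner ℝ v v₁ / inner ℝ v₁ v₁ : ℝ))
    (hξ₂ : 0 ≤ (inner ℝ v v₂ / inner ℝ v₂ v₂ : ℝ)) :
    (inner ℝ v v : ℝ) ≥
      (inner ℝ v v₁ / inner ℝ v₁ v₁ : ℝ) ^ 2 * (inner ℝ v₁ v₁ : ℝ) ^ 2 * (inner ℝ v₂ v₂ : ℝ)
        / ((inner ℝ v₁ v₁ : ℝ) * (inner ℝ v₂ v₂ : ℝ) - (inner ℝ v₁ v₂ : ℝ) ^ 2)
      + (inner ℝ v v₂ / inner ℝ v₂ v₂ : ℝ) ^ 2 * (inner ℝ v₂ v₂ : ℝ) ^ 2 * (inner ℝ v₁ v₁ : ℝ)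
        / ((inner ℝ v₁ v₁ : ℝ) * (inner ℝ v₂ v₂ : ℝ) - (inner ℝ v₁ v₂ : ℝ) ^ 2) := by
  have ha := real_inner_div_inner_self_mul v v₁
  have hb := real_inner_div_inner_self_mul v v₂
  have ha₀ : 0 ≤ (inner ℝ v v₁ : ℝ) := ha ▸ mul_nonneg hξ₁ real_inner_self_nonneg
  have hb₀ : 0 ≤ (inner ℝ v v₂ : ℝ) := hb ▸ mul_nonneg hξ₂ real_inner_self_nonneg
  have hD : 0 ≤ (inner ℝ v₁ v₁ : ℝ) * inner ℝ v₂ v₂ - inner ℝ v₁ v₂ ^ 2 := by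
    nlinarith [real_inner_mul_inner_self_le v₁ v₂]
  rw [← add_div, ← mul_pow, ← mul_pow, ha, hb, ge_iff_le]
  refine div_le_of_le_mul₀ hD real_inner_self_nonneg ?_
  nlinarith [inner_self_mul_det_gram_two_ge v v₁ v₂,
    mul_nonneg (mul_nonneg ha₀ hb₀) (neg_nonneg.mpr hneg)]

/-- If {v₁,v₂} is a basis of a 2-dimensional real inner product space with
⟨v₁,v₂⟩ ≤ 0 and the coefficients ξⱼ(v) = ⟨v,vⱼ⟩/⟨vⱼ,vⱼ⟩ are nonnegative, then
⟨v,v⟩ dominates the sum of the two "diagonal" terms. -/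
theorem stmt_1 {V : Type*} [NormedAddCommGroup V] [InnerProductSpace ℝ V]
    (hdim : Module.finrank ℝ V = 2) (v₁ v₂ : V)
    (hli : LinearIndependent ℝ ![v₁, v₂])
    (hneg : (inner ℝ v₁ v₂ : ℝ) ≤ 0) (v : V)
    (hξ₁ : 0 ≤ (inner ℝ v v₁ / inner ℝ v₁ v₁ : ℝ))
    (hξ₂ : 0 ≤ (inner ℝ v v₂ / inner ℝ v₂ v₂ : ℝ)) :
    (inner ℝ v v : ℝ) ≥
      (inner ℝ v v₁ / inner ℝ v₁ v₁ : ℝ) ^ 2 * (inner ℝ v₁ v₁ : ℝ) ^ 2 * (inner ℝ v₂ v₂ : ℝ)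
        / ((inner ℝ v₁ v₁ : ℝ) * (inner ℝ v₂ v₂ : ℝ) - (inner ℝ v₁ v₂ : ℝ) ^ 2)
      + (inner ℝ v v₂ / inner ℝ v₂ v₂ : ℝ) ^ 2 * (inner ℝ v₂ v₂ : ℝ) ^ 2 * (inner ℝ v₁ v₁ : ℝ)
        / ((inner ℝ v₁ v₁ : ℝ) * (inner ℝ v₂ v₂ : ℝ) - (inner ℝ v₁ v₂ : ℝ) ^ 2) :=
  stmt_1_general v₁ v₂ hneg v hξ₁ hξ₂
end

section
/- Fix s ∈ {1,2}. For every ε > 0 there is a constant C_ε such that for all integers N ≥ 1 and all integers u, v, the number of triples (n₁, n₂, n₃) ∈ {0,...,N}³ with n₁ + n₂ + n₃ = u and n₁² + n₂² + n₃² = v is at most C_ε N^ε. -/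
/-!
On the plane `n₁ + n₂ + n₃ = u`, the sphere `n₁² + n₂² + n₃² = v` is the ellipse `X² + 3 Y² = M`
with `X = n₁ + n₂ - 2 n₃`, `Y = n₁ - n₂` and `M = 6 v - 2 u² ≤ 18 N²`, and `n ↦ (X, Y)` is
injective there. So it suffices to bound the number `r(M)` of representations of `M` by
`X² + d Y²` (`d ≥ 2`) by `d(M)²`, up to a constant, and to apply the divisor bound
`d(M) ≪_ε M^ε`.

Representations with `gcd(X, Y) = g` are `g` times primitive representations of `M / g²`. A
primitive representation `(X, Y)` of `m` yields the square root `X / Y` of `-d` modulo `m`, and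
by Brahmagupta's identity each root comes from at most two representations `±(X, Y)`. Finally,
for two square roots `t, t₀` of `a` modulo `m`, `D = gcd(m, t - t₀)` and `E = m / D` divide
`t - t₀` and `t + t₀`, so the class of `t` modulo `lcm(D, E)` is determined by `D`, while
`gcd(D, E)² ∣ 4 a`; hence `a` has at most `√(4|a|) d(m)` square roots modulo `m`.
-/

open Finset Real

theorem add_one_le_mul_two_pow_rpow {ε : ℝ} (hε : 0 < ε) (a : ℕ) :
    (a + 1 : ℝ) ≤ (1 + (ε * log 2)⁻¹) * ((2 : ℝ) ^ a) ^ ε := by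
  have hlog : 0 < ε * log 2 := mul_pos hε (log_pos one_lt_two)
  have hexp : 1 + a * (ε * log 2) ≤ ((2 : ℝ) ^ a) ^ ε := by
    rw [← rpow_natCast, ← rpow_mul zero_le_two, rpow_def_of_pos two_pos]
    linarith [add_one_le_exp (log 2 * (a * ε))]
  have h1 : 1 ≤ ((2 : ℝ) ^ a) ^ ε := one_le_rpow (one_le_pow₀ one_le_two) hε.le
  have h2 : (a : ℝ) ≤ ((2 : ℝ) ^ a) ^ ε * (ε * log 2)⁻¹ := by
    rw [le_mul_inv_iff₀ hlog]; nlinarith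
  linarith

theorem add_one_le_pow_rpow {ε x : ℝ} (hx : 0 ≤ x) (h2 : 2 ≤ x ^ ε) (a : ℕ) :
    (a + 1 : ℝ) ≤ (x ^ a) ^ ε := by
  rw [← rpow_pow_comm hx]
  calc (a + 1 : ℝ) ≤ 2 ^ a := by exact_mod_cast Nat.lt_two_pow_self
    _ ≤ (x ^ ε) ^ a := pow_le_pow_left₀ zero_le_two h2 a

theorem exists_card_divisors_le_mul_rpow {ε : ℝ} (hε : 0 < ε) :
    ∃ C : ℝ, 0 < C ∧ ∀ n : ℕ, n ≠ 0 → (#n.divisors : ℝ) ≤ C * (n : ℝ) ^ ε := by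
  set K : ℝ := 1 + (ε * log 2)⁻¹
  have hK : 1 ≤ K := le_add_of_nonneg_right (inv_nonneg.2 (mul_pos hε (log_pos one_lt_two)).le)
  set B : ℕ := ⌈(2 : ℝ) ^ ε⁻¹⌉₊
  refine ⟨K ^ B, by positivity, fun n hn => ?_⟩
  -- small primes may cost a factor `K` each, primes `p ≥ 2 ^ (1 / ε)` cost nothing
  have hlocal : ∀ p ∈ n.primeFactors, (n.factorization p + 1 : ℝ) ≤
      (if p < B then K else 1) * (((p : ℝ) ^ n.factorization p) ^ ε) := by
    intro p hp
    have hp2 : (2 : ℝ) ≤ p := by exact_mod_cast (Nat.prime_of_mem_primeFactors hp).two_le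
    split_ifs with hpB
    · refine (add_one_le_mul_two_pow_rpow hε _).trans (mul_le_mul_of_nonneg_left ?_ (by positivity))
      gcongr
    · rw [one_mul]
      refine add_one_le_pow_rpow (by positivity) ?_ _
      calc (2 : ℝ) = ((2 : ℝ) ^ ε⁻¹) ^ ε := by
            rw [← rpow_mul zero_le_two, inv_mul_cancel₀ hε.ne', rpow_one]
        _ ≤ (p : ℝ) ^ ε := by
          gcongr
          exact (Nat.le_ceil _).trans (by exact_mod_cast not_lt.1 hpB)
  have hsmall : ∏ p ∈ n.primeFactors, (if p < B then K else 1) ≤ K ^ B := by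
    rw [← prod_filter, prod_const]
    exact pow_le_pow_right₀ hK ((card_le_card fun p hp => mem_range.2 (mem_filter.1 hp).2).trans
      (card_range B).le)
  have hn_eq : (n : ℝ) ^ ε = ∏ p ∈ n.primeFactors, ((p : ℝ) ^ n.factorization p) ^ ε := by
    conv_lhs =>
      rw [← Nat.prod_factorization_pow_eq_self hn, Nat.prod_factorization_eq_prod_primeFactors]
    push_cast
    exact (finsetProd_rpow _ _ (fun p _ => by positivity) ε).symm
  rw [Nat.card_divisors hn, hn_eq]
  push_cast
  calc ∏ p ∈ n.primeFactors, (n.factorization p + 1 : ℝ)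
      ≤ ∏ p ∈ n.primeFactors, (if p < B then K else 1) * (((p : ℝ) ^ n.factorization p) ^ ε) :=
        prod_le_prod (fun p _ => by positivity) hlocal
    _ ≤ K ^ B * ∏ p ∈ n.primeFactors, ((p : ℝ) ^ n.factorization p) ^ ε := by
        rw [prod_mul_distrib]; gcongr

def sqrtsMod (a : ℤ) (m : ℕ) : Finset ℕ :=
  {t ∈ range m | (m : ℤ) ∣ (t : ℤ) ^ 2 - a}

theorem Int.div_gcd_dvd_of_dvd_mul {m : ℕ} (hm : m ≠ 0) {x y : ℤ} (h : (m : ℤ) ∣ x * y) :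
    ((m / Int.gcd m x : ℕ) : ℤ) ∣ y := by
  have hg : Int.gcd m x ∣ m := by exact_mod_cast Int.gcd_dvd_left (m : ℤ) x
  have hg0 : (Int.gcd m x : ℤ) ≠ 0 := by exact_mod_cast (Nat.pos_of_dvd_of_pos hg (by omega)).ne'
  rw [← dvd_gcd_mul_iff_dvd_mul] at h
  rw [← mul_dvd_mul_iff_left hg0, ← Nat.cast_mul, Nat.mul_div_cancel' hg]
  exact h

theorem Int.sq_dvd_four_mul_of_dvd_sub_of_dvd_add {g x y a : ℤ} (hsub : g ∣ x - y)
    (hadd : g ∣ x + y) (hsq : g ^ 2 ∣ x ^ 2 - a) : g ^ 2 ∣ 4 * a := by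
  have h2x : g ∣ 2 * x := by simpa [two_mul, add_add_sub_cancel] using dvd_add hadd hsub
  have : g ^ 2 ∣ (2 * x) ^ 2 - 4 * (x ^ 2 - a) :=
    dvd_sub (pow_dvd_pow_of_dvd h2x 2) (hsq.mul_left 4)
  rwa [show (2 * x) ^ 2 - 4 * (x ^ 2 - a) = 4 * a by ring] at this

theorem div_gcd_sub_dvd_add {a : ℤ} {m t t₀ : ℕ} (hm : m ≠ 0) (ht : (m : ℤ) ∣ (t : ℤ) ^ 2 - a)
    (ht₀ : (m : ℤ) ∣ (t₀ : ℤ) ^ 2 - a) : ((m / Int.gcd m ((t : ℤ) - t₀) : ℕ) : ℤ) ∣ t + t₀ := by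
  refine Int.div_gcd_dvd_of_dvd_mul hm ?_
  have := dvd_sub ht ht₀
  rwa [show (t : ℤ) ^ 2 - a - ((t₀ : ℤ) ^ 2 - a) = (t - t₀) * (t + t₀) by ring] at this

theorem card_filter_sqrtsMod_gcd_sub_eq_le {a : ℤ} (ha : a ≠ 0) {m t₀ : ℕ}
    (ht₀ : (m : ℤ) ∣ (t₀ : ℤ) ^ 2 - a) (d : ℕ) :
    #{t ∈ sqrtsMod a m | Int.gcd m (((t : ℕ) : ℤ) - t₀) = d} ≤ Nat.sqrt (4 * a.natAbs) := by
  set F := {t ∈ sqrtsMod a m | Int.gcd m (((t : ℕ) : ℤ) - t₀) = d}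
  rcases F.eq_empty_or_nonempty with hF | ⟨t₁, ht₁⟩
  · simp [hF]
  have hF : ∀ t ∈ F, t < m ∧ (m : ℤ) ∣ (t : ℤ) ^ 2 - a ∧ Int.gcd m ((t : ℤ) - t₀) = d := by
    intro t ht
    simp only [F, sqrtsMod, mem_filter, mem_range] at ht
    exact ⟨ht.1.1, ht.1.2, ht.2⟩
  obtain ⟨ht₁m, ht₁a, rfl⟩ := hF t₁ ht₁
  have hm : m ≠ 0 := by omega
  set d := Int.gcd m ((t₁ : ℤ) - t₀)
  set e := m / d
  have hde : d * e = m := Nat.mul_div_cancel' (by exact_mod_cast Int.gcd_dvd_left (m : ℤ) _)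
  have hgl : Nat.gcd d e * Nat.lcm d e = m := by rw [Nat.gcd_mul_lcm, hde]
  have hl : 0 < Nat.lcm d e := Nat.pos_of_ne_zero fun h => hm (by simp [← hgl, h])
  have hsub₁ : (d : ℤ) ∣ t₁ - t₀ := Int.gcd_dvd_right _ _
  have hadd₁ : (e : ℤ) ∣ t₁ + t₀ := div_gcd_sub_dvd_add hm ht₁a ht₀
  have hgd : (Nat.gcd d e : ℤ) ∣ d := Int.natCast_dvd_natCast.2 (Nat.gcd_dvd_left d e)
  have hge : (Nat.gcd d e : ℤ) ∣ e := Int.natCast_dvd_natCast.2 (Nat.gcd_dvd_right d e)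
  have hg : Nat.gcd d e ≤ Nat.sqrt (4 * a.natAbs) := by
    have hg_sq : (Nat.gcd d e : ℤ) ^ 2 ∣ 4 * a := by
      refine Int.sq_dvd_four_mul_of_dvd_sub_of_dvd_add (hgd.trans hsub₁) (hge.trans hadd₁)
        (dvd_trans ?_ ht₁a)
      rw [sq, ← hde, Nat.cast_mul]
      exact mul_dvd_mul hgd hge
    refine Nat.le_sqrt'.2 (Nat.le_of_dvd (by positivity) ?_)
    simpa [Int.natAbs_mul, Int.natAbs_pow] using Int.natAbs_dvd_natAbs.2 hg_sq
  have hfiber : F ⊆ {t ∈ range m | t ≡ t₁ [MOD Nat.lcm d e]} := by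
    intro t ht
    obtain ⟨htm, hta, htd⟩ := hF t ht
    have hsub : (d : ℤ) ∣ t - t₀ := htd ▸ Int.gcd_dvd_right _ _
    have hadd : (e : ℤ) ∣ t + t₀ := by simpa only [htd] using div_gcd_sub_dvd_add hm hta ht₀
    refine mem_filter.2 ⟨mem_range.2 htm,
      (Nat.mod_lcm (Nat.modEq_iff_dvd.2 ?_) (Nat.modEq_iff_dvd.2 ?_)).symm⟩
    · simpa only [sub_sub_sub_cancel_right] using dvd_sub hsub hsub₁
    · simpa only [add_sub_add_right_eq_sub] using dvd_sub hadd hadd₁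
  calc #F ≤ #{t ∈ range m | t ≡ t₁ [MOD Nat.lcm d e]} := card_le_card hfiber
    _ = Nat.gcd d e := by
      rw [← Nat.count_eq_card_filter_range, Nat.count_modEq_card _ hl, ← hgl,
        Nat.mul_mod_left, Nat.mul_div_cancel _ hl]
      simp
    _ ≤ _ := hg

theorem card_sqrtsMod_le {a : ℤ} (ha : a ≠ 0) (m : ℕ) :
    #(sqrtsMod a m) ≤ Nat.sqrt (4 * a.natAbs) * #m.divisors := by
  rcases (sqrtsMod a m).eq_empty_or_nonempty with hS | ⟨t₀, ht₀⟩
  · simp [hS]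
  simp only [sqrtsMod, mem_filter, mem_range] at ht₀
  exact card_le_mul_card_image_of_maps_to
    (fun t _ => Nat.mem_divisors.2 ⟨by exact_mod_cast Int.gcd_dvd_left (m : ℤ) _, by omega⟩) _
    (fun d _ => card_filter_sqrtsMod_gcd_sub_eq_le ha ht₀.2 d)

-- The box `[-M, M]²` only serves to make the set finite, see `mem_quadReps`.
noncomputable def quadReps (d M : ℤ) : Finset (ℤ × ℤ) :=
  {p ∈ Icc (-M) M ×ˢ Icc (-M) M | p.1 ^ 2 + d * p.2 ^ 2 = M}

theorem mem_quadReps {d M : ℤ} (hd : 1 ≤ d) {p : ℤ × ℤ} :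
    p ∈ quadReps d M ↔ p.1 ^ 2 + d * p.2 ^ 2 = M := by
  refine ⟨fun h => (mem_filter.1 h).2, fun h => mem_filter.2 ⟨?_, h⟩⟩
  simp only [mem_product, mem_Icc]
  refine ⟨⟨?_, ?_⟩, ?_, ?_⟩ <;>
    nlinarith [sq_nonneg p.1, sq_nonneg p.2, sq_nonneg (p.1 + 1), sq_nonneg (p.1 - 1),
      sq_nonneg (p.2 + 1), sq_nonneg (p.2 - 1)]

theorem eq_zero_of_sq_add_mul_sq_nonpos {d x y : ℤ} (hd : 0 < d) (h : x ^ 2 + d * y ^ 2 ≤ 0) :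
    (x, y) = 0 := by
  ext <;> simp only [Prod.fst_zero, Prod.snd_zero] <;> nlinarith [sq_nonneg x, sq_nonneg y]

theorem card_quadReps_le_one {d M : ℤ} (hd : 1 ≤ d) (hM : M ≤ 0) : #(quadReps d M) ≤ 1 := by
  have hzero : ∀ p ∈ quadReps d M, p = 0 := fun p hp =>
    eq_zero_of_sq_add_mul_sq_nonpos (by omega) (((mem_quadReps hd).1 hp).trans_le hM)
  exact card_le_one.2 fun p hp q hq => by rw [hzero p hp, hzero q hq]

theorem eq_or_eq_neg_of_dvd_mul_sub_mul {d m x y x' y' : ℤ} (hd : 2 ≤ d)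
    (h : x ^ 2 + d * y ^ 2 = m) (h' : x' ^ 2 + d * y' ^ 2 = m) (hdvd : m ∣ x * y' - x' * y) :
    (x', y') = (x, y) ∨ (x', y') = -(x, y) := by
  -- Brahmagupta's identity; as `d ≥ 2`, it leaves no room for a nonzero multiple of `m`
  have hid : (x * x' + d * y * y') ^ 2 + d * (x * y' - x' * y) ^ 2 = m ^ 2 := by
    linear_combination (x' ^ 2 + d * y' ^ 2) * h + m * h'
  have hm : 0 ≤ m := by rw [← h]; positivity
  have hB : x * y' - x' * y = 0 := by
    by_contra hB
    have hle := pow_le_pow_left₀ hm (Int.le_of_dvd (abs_pos.2 hB) ((dvd_abs _ _).2 hdvd)) 2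
    rw [sq_abs] at hle
    nlinarith [pow_pos (abs_pos.2 hB) 2, sq_abs (x * y' - x' * y), sq_nonneg (x * x' + d * y * y')]
  have hA : (x * x' + d * y * y') ^ 2 = m ^ 2 := by rw [← hid, hB]; ring
  rcases sq_eq_sq_iff_eq_or_eq_neg.1 hA with hA | hA
  · have h0 := eq_zero_of_sq_add_mul_sq_nonpos (d := d) (x := x' - x) (y := y' - y) (by omega)
      (le_of_eq (by linear_combination h + h' - 2 * hA))
    left; simp only [Prod.ext_iff, Prod.fst_zero, Prod.snd_zero] at h0 ⊢; omega
  · have h0 := eq_zero_of_sq_add_mul_sq_nonpos (d := d) (x := x' + x) (y := y' + y) (by omega)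
      (le_of_eq (by linear_combination h + h' + 2 * hA))
    right
    simp only [Prod.ext_iff, Prod.fst_zero, Prod.snd_zero, Prod.fst_neg, Prod.snd_neg] at h0 ⊢
    omega

theorem isUnit_intCast_of_sq_add_mul_sq_eq {d x y : ℤ} {m : ℕ} (h : x ^ 2 + d * y ^ 2 = m)
    (hxy : IsCoprime x y) : IsUnit (y : ZMod m) := by
  have := (hxy.pow_left (m := 2)).add_mul_right_left (d * y)
  rw [mul_assoc, ← sq, h] at this
  exact (ZMod.coe_int_isUnit_iff_isCoprime _ _).2 this

theorem val_mul_inv_mem_sqrtsMod {d x y : ℤ} {m : ℕ} [NeZero m] (h : x ^ 2 + d * y ^ 2 = m)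
    (hy : (y : ZMod m) * (y : ZMod m)⁻¹ = 1) :
    ((x : ZMod m) * (y : ZMod m)⁻¹).val ∈ sqrtsMod (-d) m := by
  have h' : (x : ZMod m) ^ 2 + d * (y : ZMod m) ^ 2 = 0 := by
    simpa using congrArg (fun z : ℤ => (z : ZMod m)) h
  refine mem_filter.2 ⟨mem_range.2 (ZMod.val_lt _), (ZMod.intCast_zmod_eq_zero_iff_dvd _ _).1 ?_⟩
  push_cast
  rw [ZMod.natCast_zmod_val]
  linear_combination ((y : ZMod m)⁻¹) ^ 2 * h' - d * ((y : ZMod m) * (y : ZMod m)⁻¹ + 1) * hy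

theorem eq_or_eq_neg_of_mul_inv_eq {d x y x' y' : ℤ} {m : ℕ} (hd : 2 ≤ d)
    (h : x ^ 2 + d * y ^ 2 = m) (h' : x' ^ 2 + d * y' ^ 2 = m)
    (hy : (y : ZMod m) * (y : ZMod m)⁻¹ = 1) (hy' : (y' : ZMod m) * (y' : ZMod m)⁻¹ = 1)
    (hxy : (x : ZMod m) * (y : ZMod m)⁻¹ = x' * (y' : ZMod m)⁻¹) :
    (x', y') = (x, y) ∨ (x', y') = -(x, y) := by
  refine eq_or_eq_neg_of_dvd_mul_sub_mul hd h h' ?_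
  rw [← ZMod.intCast_zmod_eq_zero_iff_dvd]
  push_cast
  linear_combination (y : ZMod m) * y' * hxy - x * y' * hy + x' * y * hy'

theorem card_primitive_quadReps_le {d : ℤ} (hd : 2 ≤ d) (m : ℕ) :
    #{p ∈ quadReps d m | Int.gcd p.1 p.2 = 1} ≤ 2 * #(sqrtsMod (-d) m) := by
  rcases eq_or_ne m 0 with rfl | hm
  · refine (card_eq_zero.2 (filter_eq_empty_iff.2 fun p hp => ?_)).trans_le (Nat.zero_le _)
    rw [mem_quadReps (by omega)] at hp
    rw [← Prod.mk.eta (p := p), eq_zero_of_sq_add_mul_sq_nonpos (by omega) hp.le]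
    decide
  have : NeZero m := ⟨hm⟩
  set P := {p ∈ quadReps d m | Int.gcd p.1 p.2 = 1}
  have hrep : ∀ p ∈ P, p.1 ^ 2 + d * p.2 ^ 2 = m ∧ (p.2 : ZMod m) * (p.2 : ZMod m)⁻¹ = 1 := by
    intro p hp
    rw [mem_filter, mem_quadReps (by omega), ← Int.isCoprime_iff_gcd_eq_one] at hp
    exact ⟨hp.1, ZMod.mul_inv_of_unit _ (isUnit_intCast_of_sq_add_mul_sq_eq hp.1 hp.2)⟩
  refine card_le_mul_card_image_of_maps_to (f := fun p => ((p.1 : ZMod m) * (p.2 : ZMod m)⁻¹).val)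
    (fun p hp => val_mul_inv_mem_sqrtsMod (hrep p hp).1 (hrep p hp).2) 2 (fun t _ => ?_)
  rcases ({p ∈ P | ((p.1 : ZMod m) * (p.2 : ZMod m)⁻¹).val = t}).eq_empty_or_nonempty
    with hF | ⟨p₁, hp₁⟩
  · simp [hF]
  rw [mem_filter] at hp₁
  calc #{p ∈ P | ((p.1 : ZMod m) * (p.2 : ZMod m)⁻¹).val = t}
      ≤ #({p₁, -p₁} : Finset (ℤ × ℤ)) := card_le_card fun p hp => by
        rw [mem_filter] at hp
        rcases eq_or_eq_neg_of_mul_inv_eq hd (hrep p₁ hp₁.1).1 (hrep p hp.1).1 (hrep p₁ hp₁.1).2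
          (hrep p hp.1).2 (ZMod.val_injective _ (hp₁.2.trans hp.2.symm)) with h | h <;>
          simp only [Prod.mk.eta] at h <;> simp [h]
    _ ≤ 2 := card_le_two

theorem sq_gcd_dvd_of_mem_quadReps {d M : ℤ} {p : ℤ × ℤ} (hp : p ∈ quadReps d M) :
    (Int.gcd p.1 p.2 : ℤ) ^ 2 ∣ M := by
  rw [← (mem_filter.1 hp).2]
  exact dvd_add (pow_dvd_pow_of_dvd (Int.gcd_dvd_left _ _) 2)
    (dvd_mul_of_dvd_right (pow_dvd_pow_of_dvd (Int.gcd_dvd_right _ _) 2) d)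

theorem card_filter_gcd_eq_quadReps_le {d : ℤ} (hd : 1 ≤ d) {g : ℕ} (hg : g ≠ 0) (m : ℕ) :
    #{p ∈ quadReps d (g ^ 2 * m : ℕ) | Int.gcd p.1 p.2 = g} ≤
      #{p ∈ quadReps d m | Int.gcd p.1 p.2 = 1} := by
  have hg0 : (g : ℤ) ≠ 0 := by exact_mod_cast hg
  have hdiv : ∀ p ∈ {p ∈ quadReps d (g ^ 2 * m : ℕ) | Int.gcd p.1 p.2 = g},
      p.1 = g * (p.1 / g) ∧ p.2 = g * (p.2 / g) := by
    intro p hp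
    rw [mem_filter] at hp
    exact ⟨(Int.mul_ediv_cancel' (hp.2 ▸ Int.gcd_dvd_left _ _)).symm,
      (Int.mul_ediv_cancel' (hp.2 ▸ Int.gcd_dvd_right _ _)).symm⟩
  refine card_le_card_of_injOn (fun p => (p.1 / g, p.2 / g)) (fun p hp => ?_)
    (fun p hp q hq hpq => ?_)
  · have hp' := mem_filter.1 hp
    rw [mem_quadReps hd] at hp'
    rw [mem_coe, mem_filter, mem_quadReps hd]
    refine ⟨mul_left_cancel₀ (pow_ne_zero 2 hg0) ?_, ?_⟩
    · have h := hp'.1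
      rw [(hdiv p hp).1, (hdiv p hp).2] at h
      push_cast at h
      linear_combination h
    · have := Int.gcd_div_gcd_div_gcd (i := p.1) (j := p.2) (by omega)
      rwa [hp'.2] at this
  · simp only [Prod.mk.injEq] at hpq
    rw [Prod.ext_iff, (hdiv p hp).1, (hdiv p hp).2, (hdiv q hq).1, (hdiv q hq).2, hpq.1, hpq.2]
    simp

theorem card_quadReps_le {d : ℤ} (hd : 2 ≤ d) {M : ℕ} (hM : M ≠ 0) :
    #(quadReps d M) ≤ 2 * Nat.sqrt (4 * d.natAbs) * #M.divisors * #M.divisors := by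
  refine card_le_mul_card_image_of_maps_to (f := fun p => Int.gcd p.1 p.2)
    (fun p hp => Nat.mem_divisors.2 ⟨?_, hM⟩) _ (fun g hg => ?_)
  · exact Int.natCast_dvd_natCast.1
      ((dvd_pow_self _ two_ne_zero).trans (sq_gcd_dvd_of_mem_quadReps hp))
  rcases ({p ∈ quadReps d M | Int.gcd p.1 p.2 = g}).eq_empty_or_nonempty with hF | ⟨p₀, hp₀⟩
  · simp [hF]
  rw [mem_filter] at hp₀
  obtain ⟨m, rfl⟩ : g ^ 2 ∣ M := by
    exact_mod_cast hp₀.2 ▸ sq_gcd_dvd_of_mem_quadReps hp₀.1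
  calc #{p ∈ quadReps d (g ^ 2 * m : ℕ) | Int.gcd p.1 p.2 = g}
      ≤ #{p ∈ quadReps d m | Int.gcd p.1 p.2 = 1} :=
        card_filter_gcd_eq_quadReps_le (by omega) (Nat.pos_of_mem_divisors hg).ne' m
    _ ≤ 2 * #(sqrtsMod (-d) m) := card_primitive_quadReps_le hd m
    _ ≤ 2 * (Nat.sqrt (4 * (-d).natAbs) * #m.divisors) := by
        gcongr; exact card_sqrtsMod_le (by omega) m
    _ ≤ 2 * Nat.sqrt (4 * d.natAbs) * #(g ^ 2 * m).divisors := by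
        rw [Int.natAbs_neg, mul_assoc]
        gcongr
        exact Dvd.intro_left _ rfl

theorem exists_card_quadReps_le_mul_rpow {d : ℤ} (hd : 2 ≤ d) {ε : ℝ} (hε : 0 < ε) :
    ∃ C : ℝ, 0 < C ∧ ∀ (M : ℤ) (X : ℝ), 1 ≤ X → (M : ℝ) ≤ X →
      (#(quadReps d M) : ℝ) ≤ C * X ^ ε := by
  obtain ⟨C, hC, hdiv⟩ := exists_card_divisors_le_mul_rpow (half_pos hε)
  set C' : ℝ := 2 * Nat.sqrt (4 * d.natAbs) * C ^ 2
  refine ⟨C' + 1, by positivity, fun M X hX hMX => ?_⟩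
  have hXε : 1 ≤ X ^ ε := one_le_rpow hX hε.le
  rcases le_or_gt M 0 with hM | hM
  · calc (#(quadReps d M) : ℝ) ≤ 1 := by exact_mod_cast card_quadReps_le_one (by omega) hM
      _ ≤ (C' + 1) * X ^ ε := by nlinarith [show 0 ≤ C' by positivity]
  lift M to ℕ using hM.le
  have hM0 : M ≠ 0 := by exact_mod_cast hM.ne'
  have hdivM := hdiv M hM0
  calc (#(quadReps d M) : ℝ) ≤ 2 * Nat.sqrt (4 * d.natAbs) * #M.divisors * #M.divisors := by
        exact_mod_cast card_quadReps_le hd hM0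
    _ ≤ 2 * Nat.sqrt (4 * d.natAbs) * (C * (M : ℝ) ^ (ε / 2)) * (C * (M : ℝ) ^ (ε / 2)) := by
        gcongr
    _ = C' * (M : ℝ) ^ ε := by
        rw [← add_halves ε, rpow_add (by exact_mod_cast hM), add_halves]
        ring
    _ ≤ (C' + 1) * X ^ ε :=
        mul_le_mul (by linarith) (rpow_le_rpow (by positivity) (by exact_mod_cast hMX) hε.le)
          (by positivity) (by positivity)

theorem natCard_le_card_quadReps {u v : ℤ} (P : ℤ × ℤ × ℤ → Prop)
    (hP : ∀ t, P t → t.1 + t.2.1 + t.2.2 = u ∧ t.1 ^ 2 + t.2.1 ^ 2 + t.2.2 ^ 2 = v) :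
    Nat.card {t // P t} ≤ #(quadReps 3 (6 * v - 2 * u ^ 2)) := by
  rw [← Nat.card_eq_finsetCard]
  refine Nat.card_le_card_of_injective
    (fun t => ⟨(t.1.1 + t.1.2.1 - 2 * t.1.2.2, t.1.1 - t.1.2.1), ?_⟩) fun t t' htt' => ?_
  · obtain ⟨hu, hv⟩ := hP t.1 t.2
    rw [mem_quadReps (by norm_num)]
    linear_combination (-2 * (t.1.1 + t.1.2.1 + t.1.2.2 + u)) * hu + 6 * hv
  · obtain ⟨⟨a, b, c⟩, ht⟩ := t
    obtain ⟨⟨a', b', c'⟩, ht'⟩ := t'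
    have hu := (hP _ ht).1
    have hu' := (hP _ ht').1
    simp only [Subtype.mk.injEq, Prod.mk.injEq] at htt' hu hu' ⊢
    omega

theorem stmt_9_general (ε : ℝ) (hε : 0 < ε) :
    ∃ C : ℝ, 0 < C ∧ ∀ N : ℕ, 1 ≤ N → ∀ u v : ℤ,
      (Nat.card {t : ℤ × ℤ × ℤ //
          (0 ≤ t.1 ∧ t.1 ≤ (N : ℤ)) ∧ (0 ≤ t.2.1 ∧ t.2.1 ≤ (N : ℤ)) ∧
          (0 ≤ t.2.2 ∧ t.2.2 ≤ (N : ℤ)) ∧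
          t.1 + t.2.1 + t.2.2 = u ∧
          t.1 ^ 2 + t.2.1 ^ 2 + t.2.2 ^ 2 = v} : ℝ)
        ≤ C * (N : ℝ) ^ ε := by
  obtain ⟨C, hC, hreps⟩ := exists_card_quadReps_le_mul_rpow (d := 3) (by norm_num) (half_pos hε)
  refine ⟨C * 18 ^ (ε / 2), by positivity, fun N hN u v => ?_⟩
  by_cases hv : v ≤ 3 * N ^ 2
  swap
  · rw [Nat.card_eq_zero.2 (Or.inl ⟨fun t => hv ?_⟩), Nat.cast_zero]
    · positivity
    obtain ⟨⟨a, b, c⟩, ⟨ha, ha'⟩, ⟨hb, hb'⟩, ⟨hc, hc'⟩, -, rfl⟩ := t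
    nlinarith
  have hN1 : (1 : ℝ) ≤ N := by exact_mod_cast hN
  refine (Nat.cast_le.2 (natCard_le_card_quadReps _ fun t ht => ⟨ht.2.2.2.1, ht.2.2.2.2⟩)).trans ?_
  calc (#(quadReps 3 (6 * v - 2 * u ^ 2)) : ℝ) ≤ C * (18 * (N : ℝ) ^ 2) ^ (ε / 2) :=
        hreps _ _ (by nlinarith)
          (by exact_mod_cast (by nlinarith : 6 * v - 2 * u ^ 2 ≤ 18 * (N : ℤ) ^ 2))
    _ = C * 18 ^ (ε / 2) * (N : ℝ) ^ ε := by
        rw [mul_rpow (by norm_num) (by positivity), ← rpow_natCast_mul (by positivity)]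
        push_cast; ring_nf

/-- For every ε > 0 there is C_ε such that for all N ≥ 1 and all integers u, v,
the number of triples (n₁,n₂,n₃) ∈ {0,…,N}³ with n₁+n₂+n₃ = u and
n₁²+n₂²+n₃² = v is at most C_ε N^ε. -/
theorem stmt_9 (s : ℤ) (hs : s = 1 ∨ s = 2) (ε : ℝ) (hε : 0 < ε) :
    ∃ C : ℝ, 0 < C ∧ ∀ N : ℕ, 1 ≤ N → ∀ u v : ℤ,
      (Nat.card {t : ℤ × ℤ × ℤ //
          (0 ≤ t.1 ∧ t.1 ≤ (N : ℤ)) ∧ (0 ≤ t.2.1 ∧ t.2.1 ≤ (N : ℤ)) ∧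
          (0 ≤ t.2.2 ∧ t.2.2 ≤ (N : ℤ)) ∧
          t.1 + t.2.1 + t.2.2 = u ∧
          t.1 ^ 2 + t.2.1 ^ 2 + t.2.2 ^ 2 = v} : ℝ)
        ≤ C * (N : ℝ) ^ ε :=
  stmt_9_general ε hε
end

section
/- As n → ∞, the sum of Euler's totient function over odd integers up to n satisfies ∑_{j ≤ n, j odd} φ(j) = (1 + o(1)) · (ζ/4) · n², where ζ := ∑_{m odd} μ(m)/m². -/
/-!
Since `φ = μ * id` and a product is odd exactly when both factors are, restricting the convolution
to odd arguments gives `∑_{j ≤ n odd} φ j = ∑_{d ≤ n odd} μ d · ⌈⌊n/d⌋/2⌉²`, the odd `q ≤ m`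
summing to `⌈m/2⌉²`. After dividing by `n²` the `d`-th term tends to `μ d / (4 d²)` and is bounded
by `1 / d²`, so Tannery's theorem (dominated convergence for series) gives the limit.
-/

open Filter Finset Topology
open scoped ArithmeticFunction.Moebius Nat

namespace ArithmeticFunction

variable {R : Type*}

def restrictOdd [Zero R] (f : ArithmeticFunction R) : ArithmeticFunction R :=
  ⟨fun n => if Odd n then f n else 0, by simp⟩

@[simp]
theorem restrictOdd_apply [Zero R] (f : ArithmeticFunction R) (n : ℕ) :
    restrictOdd f n = if Odd n then f n else 0 := rfl

theorem restrictOdd_mul_restrictOdd [Semiring R] (f g : ArithmeticFunction R) :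
    restrictOdd f * restrictOdd g = restrictOdd (f * g) := by
  ext n
  simp only [mul_apply, restrictOdd_apply]
  split_ifs with hn
  · refine sum_congr rfl fun x hx => ?_
    rw [← (Nat.mem_divisorsAntidiagonal.mp hx).1, Nat.odd_mul] at hn
    simp [hn.1, hn.2]
  · refine sum_eq_zero fun x hx => ?_
    rw [← (Nat.mem_divisorsAntidiagonal.mp hx).1, Nat.odd_mul, not_and_or] at hn
    rcases hn with h | h <;> simp [h]

theorem sum_Ioc_filter_odd_mul_eq_sum_sum [Semiring R] (f g : ArithmeticFunction R) (N : ℕ) :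
    ∑ n ∈ Ioc 0 N with Odd n, (f * g) n =
      ∑ n ∈ Ioc 0 N with Odd n, f n * ∑ m ∈ Ioc 0 (N / n) with Odd m, g m := by
  have h := sum_Ioc_mul_eq_sum_sum (restrictOdd f) (restrictOdd g) N
  simp only [restrictOdd_mul_restrictOdd, restrictOdd_apply, ite_mul, zero_mul] at h
  simpa only [sum_filter] using h

theorem moebius_mul_id_apply [Ring R] (n : ℕ) :
    ((μ : ArithmeticFunction R) * ((ArithmeticFunction.id : ArithmeticFunction ℕ) :
      ArithmeticFunction R)) n = φ n := by
  rcases n.eq_zero_or_pos with rfl | hn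
  · simp
  rw [mul_apply]
  simp only [intCoe_apply, natCoe_apply, id_apply]
  refine (sum_eq_iff_sum_mul_moebius_eq (f := fun m => (φ m : R)) (g := fun m => (m : R))).mp
    (fun m _ => ?_) n hn
  rw [← Nat.cast_sum, Nat.sum_totient]

end ArithmeticFunction

theorem Nat.sum_Ioc_filter_odd_eq_sq (m : ℕ) :
    ∑ q ∈ Ioc 0 m with Odd q, q = ((m + 1) / 2) ^ 2 := by
  rw [sum_filter]
  induction m with
  | zero => simp
  | succ m ih =>
    rw [sum_Ioc_succ_top m.zero_le, ih]
    rcases Nat.even_or_odd' m with ⟨k, rfl | rfl⟩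
    · rw [if_pos (by simp), show (2 * k + 1 + 1) / 2 = k + 1 by omega,
        show (2 * k + 1) / 2 = k by omega]
      ring
    · rw [if_neg (by simp [parity_simps]), show (2 * k + 1 + 1 + 1) / 2 = k + 1 by omega,
        show (2 * k + 1 + 1) / 2 = k + 1 by omega, add_zero]

theorem abs_half_div_sub_mul_le (n d : ℕ) :
    |(((n / d + 1) / 2 : ℕ) : ℝ) - 1 / (2 * d) * n| ≤ 1 := by
  rcases d.eq_zero_or_pos with rfl | hd
  · simp
  have hd' : (0 : ℝ) < d := by exact_mod_cast hd
  have hc : ((n / d : ℕ) : ℝ) ≤ 2 * ((n / d + 1) / 2 : ℕ) ∧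
      2 * (((n / d + 1) / 2 : ℕ) : ℝ) ≤ (n / d : ℕ) + 1 := by
    constructor <;> norm_cast <;> omega
  have hq : ((n / d : ℕ) : ℝ) * d ≤ n ∧ (n : ℝ) < (n / d : ℕ) * d + d := by
    constructor <;> norm_cast
    exacts [Nat.div_mul_le_self n d, Nat.lt_div_mul_add hd]
  have hn : ((n / d : ℕ) : ℝ) / 2 ≤ 1 / (2 * d) * n ∧
      1 / (2 * d) * n ≤ ((n / d : ℕ) : ℝ) / 2 + 1 / 2 := by
    rw [one_div_mul_eq_div, div_le_div_iff₀ two_pos (by positivity), ← add_div,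
      div_le_div_iff₀ (by positivity) two_pos]
    constructor <;> nlinarith
  rw [abs_le]
  constructor <;> linarith

theorem sum_Icc_filter_odd_totient_eq (n : ℕ) :
    ∑ j ∈ Icc 1 n with Odd j, (φ j : ℝ) =
      ∑ d ∈ Icc 1 n with Odd d, (μ d : ℝ) * (((n / d + 1) / 2 : ℕ) : ℝ) ^ 2 := by
  have hI : Icc 1 n = Ioc 0 n := Icc_add_one_left_eq_Ioc 0 n
  simp only [hI, ← ArithmeticFunction.moebius_mul_id_apply (R := ℝ),
    ArithmeticFunction.sum_Ioc_filter_odd_mul_eq_sum_sum]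
  refine sum_congr rfl fun d _ => ?_
  simp only [ArithmeticFunction.intCoe_apply, ArithmeticFunction.natCoe_apply,
    ArithmeticFunction.id_apply]
  rw [← Nat.cast_sum, Nat.sum_Ioc_filter_odd_eq_sq, Nat.cast_pow]

theorem sum_Icc_filter_odd_totient_div_sq_eq_tsum (n : ℕ) :
    (∑ j ∈ Icc 1 n with Odd j, (φ j : ℝ)) / (n : ℝ) ^ 2 =
      ∑' d, if Odd d then (μ d : ℝ) * ((((n / d + 1) / 2 : ℕ) : ℝ) / n) ^ 2 else 0 := by
  rw [tsum_eq_sum (s := Icc 1 n), sum_Icc_filter_odd_totient_eq, sum_filter, sum_div]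
  · refine sum_congr rfl fun d _ => ?_
    split_ifs <;> ring
  · intro d hd
    split_ifs with hodd
    · have hnd : n / d = 0 := by
        simp only [mem_Icc] at hd
        exact Nat.div_eq_of_lt (by have := hodd.pos; omega)
      simp [hnd]
    · rfl

theorem half_div_div_le (n d : ℕ) : (((n / d + 1) / 2 : ℕ) : ℝ) / n ≤ 1 / d := by
  rcases n.eq_zero_or_pos with rfl | hn
  · simp
  have hq : (n / d + 1) / 2 ≤ n / d := by generalize n / d = k; omega
  have hc : (((n / d + 1) / 2 : ℕ) : ℝ) ≤ n / d :=
    (Nat.cast_le.mpr hq).trans Nat.cast_div_le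
  calc (((n / d + 1) / 2 : ℕ) : ℝ) / n ≤ (n / d) / n := by gcongr
    _ = 1 / d := by field_simp

theorem tendsto_div_natCast_of_abs_sub_mul_le {a : ℕ → ℝ} {c C : ℝ}
    (h : ∀ n : ℕ, |a n - c * n| ≤ C) : Tendsto (fun n : ℕ => a n / n) atTop (𝓝 c) := by
  have herr : Tendsto (fun n : ℕ => (a n - c * n) / n) atTop (𝓝 0) :=
    squeeze_zero_norm (fun n => by rw [norm_div, Real.norm_natCast]; gcongr; exact h n)
      (tendsto_const_div_atTop_nhds_zero_nat C)
  rw [← add_zero c]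
  refine (herr.const_add c).congr' ?_
  filter_upwards [eventually_ne_atTop 0] with n hn
  field_simp
  ring

/-- ∑_{j ≤ n, j odd} φ(j) = (1 + o(1)) (ζ/4) n² as n → ∞, where
ζ = ∑_{m odd} μ(m)/m². -/
theorem stmt_15 :
    Filter.Tendsto
      (fun n : ℕ =>
        (∑ j ∈ (Finset.Icc 1 n).filter (fun j => Odd j), (Nat.totient j : ℝ)) / (n : ℝ) ^ 2)
      Filter.atTop
      (nhds ((∑' m : ℕ, if Odd m then (ArithmeticFunction.moebius m : ℝ) / (m : ℝ) ^ 2 else 0) / 4)) := by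
  have hlim : (∑' m : ℕ, if Odd m then (μ m : ℝ) / (m : ℝ) ^ 2 else 0) / 4 =
      ∑' d : ℕ, if Odd d then (μ d : ℝ) * (1 / (2 * d)) ^ 2 else 0 := by
    rw [← tsum_div_const]
    congr 1 with d
    split_ifs <;> ring
  simp only [sum_Icc_filter_odd_totient_div_sq_eq_tsum, hlim]
  refine tendsto_tsum_of_dominated_convergence (bound := fun d : ℕ => 1 / (d : ℝ) ^ 2)
    (Real.summable_one_div_nat_pow.mpr one_lt_two) (fun d => ?_) (.of_forall fun n d => ?_)
  · split_ifs
    · exact ((tendsto_div_natCast_of_abs_sub_mul_le (abs_half_div_sub_mul_le · d)).pow 2).const_mul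
        _
    · exact tendsto_const_nhds
  · split_ifs
    · rw [norm_mul, norm_pow, Real.norm_eq_abs, Real.norm_eq_abs, ← one_mul (1 / _), one_div,
        ← inv_pow, ← one_div]
      gcongr
      · exact_mod_cast ArithmeticFunction.abs_moebius_le_one
      · exact (abs_of_nonneg (by positivity)).trans_le (half_div_div_le n d)
    · simp
end
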